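/- Let Φ be an irreducible (simple) root system in a Euclidean vector space V, and let W ⊂ V be a linear subspace of codimension at least 2. Then every root κ ∈ Φ \ W can be written as κ = α + β for some roots α, β ∈ Φ \ W such that (ℝα + ℝβ) ∩ W = {0}. -/
import Mathlib


open scoped RealInnerProductSpace

/-!
Statement 15 (Lemma 4.5): Let `Φ` be an irreducible (simple) reduced crystallographic root
system in a Euclidean space `V`, and `W ⊂ V` a linear subspace of codimension at least `2`.
Then every root `κ ∈ Φ \ W` can be written as `κ = α + β` with roots `α, β ∈ Φ \ W` such that
`(ℝα + ℝβ) ∩ W = {0}`.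
-/

/-- `Φ` is the root system of a complex simple Lie group: a finite, spanning, reduced,
crystallographic, irreducible root system in the Euclidean space `V`. -/
structure IsSimpleRootSystem (V : Type*) [NormedAddCommGroup V] [InnerProductSpace ℝ V]
    (Φ : Set V) : Prop where
  finite : Φ.Finite
  nonzero : (0 : V) ∉ Φ
  spans : Submodule.span ℝ Φ = ⊤
  neg_mem : ∀ α ∈ Φ, -α ∈ Φ
  reflect_mem : ∀ α ∈ Φ, ∀ β ∈ Φ, β - (2 * ⟪β, α⟫ / ⟪α, α⟫) • α ∈ Φ
  crystallographic : ∀ α ∈ Φ, ∀ β ∈ Φ, ∃ n : ℤ, 2 * ⟪β, α⟫ / ⟪α, α⟫ = (n : ℝ)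
  reduced : ∀ α ∈ Φ, ∀ c : ℝ, c • α ∈ Φ → c = 1 ∨ c = -1
  irreducible : ∀ S ⊆ Φ, (∀ a ∈ S, ∀ b ∈ Φ \ S, ⟪a, b⟫ = 0) → S = ∅ ∨ S = Φ

section Aux

variable {V : Type*} [NormedAddCommGroup V] [InnerProductSpace ℝ V] {Φ : Set V}

lemma IsSimpleRootSystem.ne_zero (hΦ : IsSimpleRootSystem V Φ) {α : V} (hα : α ∈ Φ) : α ≠ 0 :=
  fun h => hΦ.nonzero (h ▸ hα)

lemma IsSimpleRootSystem.inner_self_pos' (hΦ : IsSimpleRootSystem V Φ) {α : V} (hα : α ∈ Φ) :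
    0 < ⟪α, α⟫ := by
  rw [real_inner_self_eq_norm_mul_norm α]
  have h := norm_pos_iff.mpr (hΦ.ne_zero hα)
  exact mul_pos h h

/-- Fact B: roots with positive inner product, not equal, have a root difference. -/
lemma IsSimpleRootSystem.sub_mem (hΦ : IsSimpleRootSystem V Φ) {α β : V}
    (hα : α ∈ Φ) (hβ : β ∈ Φ) (hne : α ≠ β) (hpos : 0 < ⟪α, β⟫) : α - β ∈ Φ := by
  obtain ⟨n, hn⟩ := hΦ.crystallographic β hβ α hα
  obtain ⟨m, hm⟩ := hΦ.crystallographic α hα β hβ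
  have hαα := hΦ.inner_self_pos' hα
  have hββ := hΦ.inner_self_pos' hβ
  have hba : ⟪β, α⟫ = ⟪α, β⟫ := real_inner_comm α β
  have hn0 : (0:ℝ) < n := by rw [← hn]; exact div_pos (by linarith) hββ
  have hm0 : (0:ℝ) < m := by rw [← hm, hba]; exact div_pos (by linarith) hαα
  have hn1 : 1 ≤ n := by exact_mod_cast hn0
  have hm1 : 1 ≤ m := by exact_mod_cast hm0
  -- strict Cauchy-Schwarz
  have hns : ‖β‖ • α ≠ ‖α‖ • β := by
    intro h
    have hna : ‖α‖ ≠ 0 := norm_ne_zero_iff.mpr (hΦ.ne_zero hα)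
    have h2 : (‖β‖ / ‖α‖) • α = β := by
      rw [div_eq_mul_inv, mul_comm, mul_smul, h, ← mul_smul, inv_mul_cancel₀ hna, one_smul]
    have h3 : (‖β‖ / ‖α‖) • α ∈ Φ := by rw [h2]; exact hβ
    rcases hΦ.reduced α hα (‖β‖ / ‖α‖) h3 with h1 | h1
    · rw [h1, one_smul] at h2; exact hne h2
    · have : 0 ≤ ‖β‖ / ‖α‖ := div_nonneg (norm_nonneg _) (norm_nonneg _)
      rw [h1] at this; linarith
  have hCS : ⟪α, β⟫ < ‖α‖ * ‖β‖ := inner_lt_norm_mul_iff_real.mpr hns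
  have hnormα : ⟪α, α⟫ = ‖α‖ * ‖α‖ := real_inner_self_eq_norm_mul_norm α
  have hnormβ : ⟪β, β⟫ = ‖β‖ * ‖β‖ := real_inner_self_eq_norm_mul_norm β
  have hpα : 0 < ‖α‖ := norm_pos_iff.mpr (hΦ.ne_zero hα)
  have hpβ : 0 < ‖β‖ := norm_pos_iff.mpr (hΦ.ne_zero hβ)
  have hprod : (n:ℝ) * m < 4 := by
    rw [← hn, ← hm, hba, hnormα, hnormβ, div_mul_div_comm, div_lt_iff₀ (by positivity)]
    nlinarith [hpos, hCS, hpα, hpβ]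
  have hprodZ : n * m < 4 := by exact_mod_cast hprod
  have hcase : n = 1 ∨ m = 1 := by
    by_contra h
    push_neg at h
    have : 2 ≤ n := by omega
    have : 2 ≤ m := by omega
    nlinarith
  rcases hcase with h1 | h1
  · have := hΦ.reflect_mem β hβ α hα
    rwa [hn, h1, Int.cast_one, one_smul] at this
  · have := hΦ.reflect_mem α hα β hβ
    rw [hm, h1, Int.cast_one, one_smul] at this
    have := hΦ.neg_mem _ this
    rwa [neg_sub] at this

/-- Fact A: the roots not orthogonal to a given root span V. -/
lemma IsSimpleRootSystem.span_not_orthogonal [FiniteDimensional ℝ V]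
    (hΦ : IsSimpleRootSystem V Φ) {κ : V} (hκ : κ ∈ Φ) :
    Submodule.span ℝ {η ∈ Φ | ⟪η, κ⟫ ≠ 0} = ⊤ := by
  set S : Set V := {η ∈ Φ | ⟪η, κ⟫ ≠ 0} with hS
  set U : Submodule ℝ V := Submodule.span ℝ S with hU
  have claim : ∀ b ∈ Φ, b ∉ U → ∀ a ∈ S, ⟪a, b⟫ = 0 := by
    intro b hb hbU a haS
    by_contra hab
    obtain ⟨haΦ, haκ⟩ := haS
    by_cases hbκ : ⟪b, κ⟫ ≠ 0
    · exact hbU (Submodule.subset_span ⟨hb, hbκ⟩)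
    · push_neg at hbκ
      set c : ℝ := 2 * ⟪b, a⟫ / ⟪a, a⟫ with hc
      have hrefl : b - c • a ∈ Φ := hΦ.reflect_mem a haΦ b hb
      have hc0 : c ≠ 0 := by
        have h1 : ⟪b, a⟫ ≠ 0 := by rwa [real_inner_comm] at hab
        have h2 := hΦ.inner_self_pos' haΦ
        rw [hc]
        exact div_ne_zero (by simpa using h1) (ne_of_gt h2)
      have hmem : b - c • a ∈ S := by
        refine ⟨hrefl, ?_⟩
        rw [inner_sub_left, real_inner_smul_left, hbκ, zero_sub, neg_ne_zero]
        exact mul_ne_zero hc0 haκ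
      apply hbU
      have heq : b = (b - c • a) + c • a := by abel
      rw [heq]
      exact U.add_mem (Submodule.subset_span hmem)
        (U.smul_mem c (Submodule.subset_span ⟨haΦ, haκ⟩))
  have h0 : Φ ∩ ↑U = ∅ ∨ Φ ∩ ↑U = Φ := by
    apply hΦ.irreducible _ Set.inter_subset_left
    intro a ha b hb
    have hbU : b ∉ U := fun h => hb.2 ⟨hb.1, h⟩
    have horth : S ⊆ ↑(Submodule.orthogonal (ℝ ∙ b)) := by
      intro s hs
      exact Submodule.mem_orthogonal_singleton_iff_inner_left.mpr (claim b hb.1 hbU s hs)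
    have hUle : U ≤ Submodule.orthogonal (ℝ ∙ b) := Submodule.span_le.mpr horth
    exact Submodule.mem_orthogonal_singleton_iff_inner_left.mp (hUle ha.2)
  have hκS : κ ∈ S := ⟨hκ, ne_of_gt (hΦ.inner_self_pos' hκ)⟩
  rcases h0 with h | h
  · exfalso
    have hmem : κ ∈ Φ ∩ ↑U := ⟨hκ, Submodule.subset_span hκS⟩
    rw [h] at hmem
    exact hmem
  · have hsub : Φ ⊆ ↑U := by rw [← h]; exact Set.inter_subset_right
    have : Submodule.span ℝ Φ ≤ U := Submodule.span_le.mpr hsub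
    rw [hΦ.spans] at this
    exact top_le_iff.mp this

end Aux

theorem root_off_subspace_is_sum_of_roots_off_subspace
    (V : Type*) [NormedAddCommGroup V] [InnerProductSpace ℝ V] [FiniteDimensional ℝ V]
    (Φ : Set V) (hΦ : IsSimpleRootSystem V Φ)
    -- `W ⊆ V` a subspace of codimension at least 2
    (W : Submodule ℝ V) (hW : Module.finrank ℝ W + 2 ≤ Module.finrank ℝ V) :
    -- every root `κ ∉ W` is a sum `κ = α + β` of roots `α, β ∉ W` with `(ℝα + ℝβ) ∩ W = 0`
    ∀ κ ∈ Φ, κ ∉ W →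
      ∃ α ∈ Φ, ∃ β ∈ Φ, α ∉ W ∧ β ∉ W ∧ κ = α + β ∧
        Submodule.span ℝ ({α, β} : Set V) ⊓ W = ⊥ := by
  intro κ hκ hκW
  set W' : Submodule ℝ V := W ⊔ (ℝ ∙ κ) with hW'
  have hκ0 : κ ≠ 0 := hΦ.ne_zero hκ
  have hW'ne : W' ≠ ⊤ := by
    intro h
    have h1 : Module.finrank ℝ W' ≤ Module.finrank ℝ W + 1 := by
      refine (Submodule.finrank_add_le_finrank_add_finrank W (ℝ ∙ κ)).trans ?_
      rw [finrank_span_singleton hκ0]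
    rw [h, finrank_top] at h1
    omega
  have hex : ∃ η, η ∈ {η ∈ Φ | ⟪η, κ⟫ ≠ 0} ∧ η ∉ W' := by
    by_contra h
    push_neg at h
    have : Submodule.span ℝ {η ∈ Φ | ⟪η, κ⟫ ≠ 0} ≤ W' := Submodule.span_le.mpr h
    rw [hΦ.span_not_orthogonal hκ] at this
    exact hW'ne (top_le_iff.mp this)
  obtain ⟨η₀, ⟨hη₀Φ, hη₀κ⟩, hη₀W'⟩ := hex
  obtain ⟨η, hηΦ, hηκ, hηW'⟩ : ∃ η, η ∈ Φ ∧ 0 < ⟪κ, η⟫ ∧ η ∉ W' := by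
    have h' : ⟪κ, η₀⟫ ≠ 0 := by rwa [real_inner_comm]
    rcases h'.lt_or_gt with h | h
    · refine ⟨-η₀, hΦ.neg_mem _ hη₀Φ, by rwa [inner_neg_right, neg_pos], fun hc => ?_⟩
      exact hη₀W' (by simpa using W'.neg_mem hc)
    · exact ⟨η₀, hη₀Φ, h, hη₀W'⟩
  have hκW' : κ ∈ W' := Submodule.mem_sup_right (Submodule.mem_span_singleton_self κ)
  have hκη : κ ≠ η := fun h => hηW' (h ▸ hκW')
  have hsub : κ - η ∈ Φ := hΦ.sub_mem hκ hηΦ hκη hηκ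
  refine ⟨η, hηΦ, κ - η, hsub, fun h => hηW' (Submodule.mem_sup_left h), ?_, by abel, ?_⟩
  · intro h
    apply hηW'
    have heq : η = κ - (κ - η) := by abel
    rw [heq]
    exact W'.sub_mem hκW' (Submodule.mem_sup_left h)
  · rw [eq_bot_iff]
    intro v hv
    obtain ⟨hv1, hv2⟩ := Submodule.mem_inf.mp hv
    obtain ⟨a, b, hab⟩ := Submodule.mem_span_pair.mp hv1
    have hab' : v = (a - b) • η + b • κ := by rw [← hab]; module
    have hab0 : a - b = 0 := by
      by_contra h
      apply hηW'
      have h1 : v - b • κ = (a - b) • η := by rw [hab']; module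
      have h2 : η = (a - b)⁻¹ • (v - b • κ) := by
        rw [h1, smul_smul, inv_mul_cancel₀ h, one_smul]
      rw [h2]
      exact W'.smul_mem _ (W'.sub_mem (Submodule.mem_sup_left hv2) (W'.smul_mem b hκW'))
    have hb0 : b = 0 := by
      by_contra h
      apply hκW
      have h2 : κ = b⁻¹ • v := by
        rw [hab', hab0, zero_smul, zero_add, smul_smul, inv_mul_cancel₀ h, one_smul]
      rw [h2]
      exact W.smul_mem _ hv2
    rw [Submodule.mem_bot, hab', hab0, hb0, zero_smul, zero_smul, add_zero]
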